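/- arXiv:2402.12615 — 5 statements merged into one kernel-verified Lean document; each statement's English description precedes it below -/
import Mathlib

section
/- Let F be a linear space of 𝕂-valued functions on a non-empty set Ω, Y a locally convex Hausdorff space over 𝕂, and δ : Ω → Y a map. Consider the conditions: (i) for every continuous linear functional y' ∈ Y' one has y' ∘ δ ∈ F; (ii) for every f ∈ F there is a unique continuous linear functional T_f ∈ Y' such that T_f ∘ δ = f. Then: (a) if (ii) holds, the map T : F → Y', T(f) = T_f, is linear and injective; (b) if both (i) and (ii) hold, then T is a linear bijection of F onto Y', its inverse is given by T⁻¹(y') = y' ∘ δ for all y' ∈ Y', the triple (δ, Y, T) is a linearisation of F, and the linear span of {δ(x) | x ∈ Ω} is dense in Y. -/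
open Topology Filter Set

universe u v w

section Defs

variable (𝕜 : Type u) [RCLike 𝕜]
variable (X : Type v) [AddCommGroup X] [Module 𝕜 X] [Module ℝ X] [IsScalarTower ℝ 𝕜 X]

/-- von Neumann boundedness with respect to an explicit topology. -/
def VNB (t : TopologicalSpace X) (s : Set X) : Prop :=
  @Bornology.IsVonNBounded 𝕜 X _ _ _ t s

/-- `t` makes `X` a locally convex Hausdorff topological vector space over `𝕜`. -/
structure IsLCH (t : TopologicalSpace X) : Prop where
  tag : @IsTopologicalAddGroup X t _
  csmul : @ContinuousSMul 𝕜 X _ _ t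
  t2 : @T2Space X t
  lcs : @LocallyConvexSpace ℝ X _ _ _ _ t

/-- Absolutely convex set: balanced and convex. -/
def AbsConvexS (s : Set X) : Prop := Balanced 𝕜 s ∧ Convex ℝ s

/-- Condition (BBC): every `t`-bounded set is contained in an absolutely convex
`t`-bounded `tt`-compact set. -/
def BBC (t tt : TopologicalSpace X) : Prop :=
  ∀ s : Set X, VNB 𝕜 X t s →
    ∃ B : Set X, s ⊆ B ∧ AbsConvexS 𝕜 X B ∧ VNB 𝕜 X t B ∧ @IsCompact X tt B

/-- Condition (BBCl): every `t`-bounded set is contained in an absolutely convex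
`t`-bounded `tt`-closed set. -/
def BBCl (t tt : TopologicalSpace X) : Prop :=
  ∀ s : Set X, VNB 𝕜 X t s →
    ∃ B : Set X, s ⊆ B ∧ AbsConvexS 𝕜 X B ∧ VNB 𝕜 X t B ∧ @IsClosed X tt B

/-- Condition (CNC): `t` has a 0-neighbourhood basis of absolutely convex `tt`-closed sets. -/
def CNC (t tt : TopologicalSpace X) : Prop :=
  ∀ U ∈ @nhds X t 0, ∃ V ∈ @nhds X t 0, V ⊆ U ∧ AbsConvexS 𝕜 X V ∧ @IsClosed X tt V

/-- `g` and `tt` induce the same subspace topology on every `t`-bounded set. -/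
def AgreeOnBounded (t tt g : TopologicalSpace X) : Prop :=
  ∀ s : Set X, VNB 𝕜 X t s →
    TopologicalSpace.induced ((↑) : s → X) g = TopologicalSpace.induced ((↑) : s → X) tt

/-- `g` is the finest locally convex Hausdorff topology on `X` coinciding with `tt` on
`t`-bounded sets. -/
def IsGamma (t tt g : TopologicalSpace X) : Prop :=
  IsLCH 𝕜 X g ∧ AgreeOnBounded 𝕜 X t tt g ∧
    ∀ g' : TopologicalSpace X, IsLCH 𝕜 X g' → AgreeOnBounded 𝕜 X t tt g' → g ≤ g'

/-- Semi-Montel: every bounded set is relatively compact. -/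
def SemiMontel (t : TopologicalSpace X) : Prop :=
  ∀ s : Set X, VNB 𝕜 X t s → @IsCompact X t (@closure X t s)

/-- Barrelled: every barrel is a 0-neighbourhood. -/
def BarrelledTop (t : TopologicalSpace X) : Prop :=
  ∀ B : Set X, @IsClosed X t B → AbsConvexS 𝕜 X B → Absorbent 𝕜 B → B ∈ @nhds X t 0

/-- Quasi-barrelled: every bornivorous barrel is a 0-neighbourhood. -/
def QuasiBarrelledTop (t : TopologicalSpace X) : Prop :=
  ∀ B : Set X, @IsClosed X t B → AbsConvexS 𝕜 X B →
    (∀ s : Set X, VNB 𝕜 X t s → Absorbs 𝕜 B s) → B ∈ @nhds X t 0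

/-- Completeness of a topological abelian group topology (w.r.t. its canonical uniformity). -/
def CompleteTop (t : TopologicalSpace X) : Prop :=
  ∃ h : @IsTopologicalAddGroup X t _,
    @CompleteSpace X (@IsTopologicalAddGroup.rightUniformSpace X _ t h)

/-- Quasi-completeness: every closed bounded set is complete. -/
def QuasiCompleteTop (t : TopologicalSpace X) : Prop :=
  ∃ h : @IsTopologicalAddGroup X t _,
    ∀ s : Set X, @IsClosed X t s → VNB 𝕜 X t s →
      @IsComplete X (@IsTopologicalAddGroup.rightUniformSpace X _ t h) s

/-- Bornological: every bounded linear map into a locally convex Hausdorff space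
is continuous. -/
def Bornological (t : TopologicalSpace X) : Prop :=
  ∀ (Y : Type w) (_ : AddCommGroup Y) (_ : Module 𝕜 Y) (_ : Module ℝ Y)
    (_ : IsScalarTower ℝ 𝕜 Y) (tY : TopologicalSpace Y), IsLCH 𝕜 Y tY →
    ∀ f : X →ₗ[𝕜] Y, (∀ s : Set X, VNB 𝕜 X t s → VNB 𝕜 Y tY (f '' s)) →
      @Continuous X Y t tY f

/-- The norm `N` induces the topology `t`. -/
def InducedByNorm (t : TopologicalSpace X) (N : Seminorm 𝕜 X) : Prop :=
  (∀ x : X, N x = 0 → x = 0) ∧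
    (@nhds X t 0).HasBasis (fun ε : ℝ => 0 < ε) (fun ε => {x : X | N x < ε})

/-- The topological dual of `(X, t)` as a submodule of the space of linear functionals. -/
def dualSub (t : TopologicalSpace X) : Submodule 𝕜 (X →ₗ[𝕜] 𝕜) where
  carrier := {f : X →ₗ[𝕜] 𝕜 | @Continuous X 𝕜 t _ f}
  add_mem' := by
    intro f g hf hg
    letI := t
    exact (Continuous.add hf hg : Continuous fun x => f x + g x)
  zero_mem' := by
    letI := t
    exact (continuous_const : Continuous fun _ : X => (0 : 𝕜))
  smul_mem' := by
    intro c f hf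
    letI := t
    exact (Continuous.const_smul hf c : Continuous fun x => c • f x)

/-- Topology of uniform convergence on the members of `𝔖` on the function space `X → 𝕜`. -/
def funUC (𝔖 : Set (Set X)) : TopologicalSpace (X → 𝕜) :=
  TopologicalSpace.induced (UniformOnFun.ofFun 𝔖) (UniformOnFun.topologicalSpace X 𝕜 𝔖)

/-- Topology on the dual of `(X, t)` of uniform convergence on the members of `𝔖`. -/
def dualTopOn (t : TopologicalSpace X) (𝔖 : Set (Set X)) :
    TopologicalSpace ↥(dualSub 𝕜 X t) :=
  TopologicalSpace.induced (fun f => ((f : X →ₗ[𝕜] 𝕜) : X → 𝕜)) (funUC 𝕜 X 𝔖)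

/-- The strong topology `β(X', X)` on the dual of `(X, t)`. -/
def strongDualTop (t : TopologicalSpace X) : TopologicalSpace ↥(dualSub 𝕜 X t) :=
  dualTopOn 𝕜 X t {s : Set X | VNB 𝕜 X t s}

/-- The space `X'_{B,tt}` of linear functionals whose restriction to every `t`-bounded
set is `tt`-continuous. -/
def bdual (t tt : TopologicalSpace X) : Submodule 𝕜 (X →ₗ[𝕜] 𝕜) where
  carrier := {f : X →ₗ[𝕜] 𝕜 | ∀ s : Set X, VNB 𝕜 X t s → @ContinuousOn X 𝕜 tt _ f s}
  add_mem' := by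
    intro f g hf hg s hs
    letI := tt
    exact (hf s hs).add (hg s hs)
  zero_mem' := by
    intro s hs
    letI := tt
    exact continuousOn_const
  smul_mem' := by
    intro c f hf s hs
    letI := tt
    exact (hf s hs).const_smul c

/-- The topology `β` of uniform convergence on `t`-bounded sets on `X'_{B,tt}`. -/
def bdualTop (t tt : TopologicalSpace X) : TopologicalSpace ↥(bdual 𝕜 X t tt) :=
  TopologicalSpace.induced (fun f => ((f : X →ₗ[𝕜] 𝕜) : X → 𝕜))
    (funUC 𝕜 X {s : Set X | VNB 𝕜 X t s})

/-- The weak topology `σ(X, (X,tt)')` on `X`. -/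
def weakTopOf (tt : TopologicalSpace X) : TopologicalSpace X :=
  TopologicalSpace.induced
    (fun x => (fun f : ↥(dualSub 𝕜 X tt) => (f : X →ₗ[𝕜] 𝕜) x)) Pi.topologicalSpace

/-- Semi-reflexivity of `(X, g)`: every strongly continuous linear functional on the dual
is an evaluation. -/
def SemiReflexiveTop (g : TopologicalSpace X) : Prop :=
  ∀ F : ↥(dualSub 𝕜 X g) →ₗ[𝕜] 𝕜, @Continuous _ _ (strongDualTop 𝕜 X g) _ F →
    ∃ x : X, ∀ f : ↥(dualSub 𝕜 X g), F f = (f : X →ₗ[𝕜] 𝕜) x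

end Defs

section TopIso

variable (𝕜 : Type u) [RCLike 𝕜]

/-- `e` is a topological isomorphism from `(A, tA)` to `(B, tB)`. -/
def IsTopIso {A : Type*} {B : Type*} [AddCommGroup A] [Module 𝕜 A] [AddCommGroup B]
    [Module 𝕜 B] (tA : TopologicalSpace A) (tB : TopologicalSpace B) (e : A ≃ₗ[𝕜] B) : Prop :=
  @Continuous A B tA tB e ∧ @Continuous B A tB tA e.symm

end TopIso

section Extra

variable (𝕜 : Type u) [RCLike 𝕜]

/-- Point evaluation functional on a space of functions. -/
def evalLM {Ω : Type w} (F : Submodule 𝕜 (Ω → 𝕜)) (x : Ω) : ↥F →ₗ[𝕜] 𝕜 where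
  toFun f := (f : Ω → 𝕜) x
  map_add' _ _ := rfl
  map_smul' _ _ := rfl

/-- The topology of pointwise convergence on a space of functions. -/
def ptwiseTop {Ω : Type w} (F : Submodule 𝕜 (Ω → 𝕜)) : TopologicalSpace ↥F :=
  TopologicalSpace.induced ((↑) : ↥F → (Ω → 𝕜)) Pi.topologicalSpace

/-- Packaging of a candidate (pre)dual space: a type together with module and
topological data. -/
structure DualRep (𝕜 : Type u) [RCLike 𝕜] (X : Type v) [AddCommGroup X] [Module 𝕜 X] where
  Y : Type (max u v)
  [addgrp : AddCommGroup Y]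
  [mod : Module 𝕜 Y]
  [modR : Module ℝ Y]
  [tower : IsScalarTower ℝ 𝕜 Y]
  tY : TopologicalSpace Y

attribute [instance] DualRep.addgrp DualRep.mod DualRep.modR DualRep.tower

end Extra

/-! Everything rests on the injectivity of `y' ↦ y' ∘ δ` on `Y'`, which is the uniqueness in (ii)
for `f = 0`. On `F` the map `T` is a right inverse of it, hence linear and injective, and by (i)
also onto `Y'`. A continuous functional vanishing on the span of `δ(Ω)` therefore vanishes, so
by Hahn–Banach that span is dense. -/

theorem IsLinearMap.of_injective_comp {R M N P : Type*} [Semiring R] [AddCommMonoid M]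
    [AddCommMonoid N] [AddCommMonoid P] [Module R M] [Module R N] [Module R P]
    {Φ : M →ₗ[R] N} (hΦ : Function.Injective Φ) (ι : P →ₗ[R] N) {T : P → M}
    (hT : ∀ p, Φ (T p) = ι p) : IsLinearMap R T where
  map_add p q := hΦ <| by rw [Φ.map_add, hT, hT, hT, ι.map_add]
  map_smul c p := hΦ <| by rw [Φ.map_smul, hT, hT, ι.map_smul]

section Separation

variable {𝕜 E : Type*} [RCLike 𝕜] [AddCommGroup E] [Module 𝕜 E]

theorem Submodule.apply_eq_zero_of_forall_re_lt (p : Submodule 𝕜 E) (f : E →ₗ[𝕜] 𝕜) {u : ℝ}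
    (hu : ∀ v ∈ p, RCLike.re (f v) < u) {v : E} (hv : v ∈ p) : f v = 0 := by
  by_contra hfv
  set c : 𝕜 := ((u / ‖f v‖ ^ 2 : ℝ) : 𝕜) * starRingEnd 𝕜 (f v)
  have hc : f (c • v) = u := by
    have : (‖f v‖ : 𝕜) ≠ 0 := by exact_mod_cast norm_ne_zero_iff.mpr hfv
    rw [map_smul, smul_eq_mul, mul_assoc, RCLike.conj_mul]
    push_cast
    field_simp
  simpa [hc] using hu _ (p.smul_mem c hv)

variable [Module ℝ E] [IsScalarTower ℝ 𝕜 E] [TopologicalSpace E] [IsTopologicalAddGroup E]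
  [ContinuousSMul 𝕜 E] [LocallyConvexSpace ℝ E]

theorem Submodule.dense_of_forall_strongDual_eq_zero (p : Submodule 𝕜 E)
    (hp : ∀ f : StrongDual 𝕜 E, (∀ v ∈ p, f v = 0) → f = 0) : Dense (p : Set E) := by
  intro y
  by_contra hy
  have : ContinuousSMul ℝ E := IsScalarTower.continuousSMul 𝕜
  obtain ⟨f, u, hfp, hfy⟩ := RCLike.geometric_hahn_banach_closed_point (𝕜 := 𝕜)
    (p.restrictScalars ℝ).convex.closure isClosed_closure hy
  have hf : f = 0 := hp f fun v hv ↦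
    p.apply_eq_zero_of_forall_re_lt f (fun w hw ↦ hfp w (subset_closure hw)) hv
  have hu : 0 < u := by simpa using hfp 0 (subset_closure p.zero_mem)
  simp [hf] at hfy
  linarith

end Separation

section Linearisation

variable {𝕜 : Type u} [RCLike 𝕜] {Ω : Type w} {Y : Type v} [AddCommGroup Y] [Module 𝕜 Y]
  {tY : TopologicalSpace Y} {δ : Ω → Y}

variable (𝕜 tY) in
def dualSub.precomp (δ : Ω → Y) : ↥(dualSub 𝕜 Y tY) →ₗ[𝕜] (Ω → 𝕜) where
  toFun y' x := (y' : Y →ₗ[𝕜] 𝕜) (δ x)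
  map_add' _ _ := rfl
  map_smul' _ _ := rfl

theorem dualSub.precomp_injective_of_existsUnique
    (h : ∃! y' : ↥(dualSub 𝕜 Y tY), ∀ x : Ω, (y' : Y →ₗ[𝕜] 𝕜) (δ x) = 0) :
    Function.Injective (dualSub.precomp 𝕜 tY δ) :=
  (injective_iff_map_eq_zero _).mpr fun _ hy' ↦
    h.unique (congrFun hy') fun _ ↦ rfl

variable {F : Submodule 𝕜 (Ω → 𝕜)} {T : ↥F → ↥(dualSub 𝕜 Y tY)}

theorem dualSub.injective_of_apply_eq
    (hT : ∀ (f : ↥F) (x : Ω), (T f : Y →ₗ[𝕜] 𝕜) (δ x) = (f : Ω → 𝕜) x) :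
    Function.Injective T :=
  fun f g hfg ↦ Subtype.ext <| funext fun x ↦ by rw [← hT f x, ← hT g x, hfg]

theorem dualSub.isLinearMap_of_apply_eq (hδ : Function.Injective (dualSub.precomp 𝕜 tY δ))
    (hT : ∀ (f : ↥F) (x : Ω), (T f : Y →ₗ[𝕜] 𝕜) (δ x) = (f : Ω → 𝕜) x) :
    IsLinearMap 𝕜 T :=
  .of_injective_comp hδ F.subtype fun f ↦ funext (hT f)

theorem dualSub.apply_eq_of_precomp_mem (hδ : Function.Injective (dualSub.precomp 𝕜 tY δ))
    (hT : ∀ (f : ↥F) (x : Ω), (T f : Y →ₗ[𝕜] 𝕜) (δ x) = (f : Ω → 𝕜) x)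
    (y' : ↥(dualSub 𝕜 Y tY)) (hy' : dualSub.precomp 𝕜 tY δ y' ∈ F) :
    T ⟨_, hy'⟩ = y' :=
  hδ <| funext (hT _)

theorem dualSub.dense_span_range [Module ℝ Y] [IsScalarTower ℝ 𝕜 Y] (hY : IsLCH 𝕜 Y tY)
    (hδ : Function.Injective (dualSub.precomp 𝕜 tY δ)) :
    @Dense Y tY ↑(Submodule.span 𝕜 (Set.range δ)) := by
  let _ := tY
  have := hY.tag; have := hY.csmul; have := hY.lcs
  refine Submodule.dense_of_forall_strongDual_eq_zero _ fun f hf ↦ ?_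
  have : (⟨(f : Y →ₗ[𝕜] 𝕜), f.cont⟩ : ↥(dualSub 𝕜 Y tY)) = 0 :=
    hδ (funext fun x ↦ hf _ (Submodule.subset_span ⟨x, rfl⟩))
  exact ContinuousLinearMap.coe_injective (congrArg Subtype.val this)

end Linearisation

theorem statement1_general {𝕜 : Type u} [RCLike 𝕜] {Ω : Type w}
    (F : Submodule 𝕜 (Ω → 𝕜))
    {Y : Type v} [AddCommGroup Y] [Module 𝕜 Y] [Module ℝ Y] [IsScalarTower ℝ 𝕜 Y]
    (tY : TopologicalSpace Y) (hY : IsLCH 𝕜 Y tY) (δ : Ω → Y) :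
    -- (a)
    ((∀ f : ↥F, ∃! T : ↥(dualSub 𝕜 Y tY),
        ∀ x : Ω, (T : Y →ₗ[𝕜] 𝕜) (δ x) = (f : Ω → 𝕜) x) →
      ∀ T : ↥F → ↥(dualSub 𝕜 Y tY),
        (∀ (f : ↥F) (x : Ω), ((T f : Y →ₗ[𝕜] 𝕜) (δ x)) = (f : Ω → 𝕜) x) →
        Function.Injective T ∧ (∀ f g : ↥F, T (f + g) = T f + T g) ∧
          ∀ (c : 𝕜) (f : ↥F), T (c • f) = c • T f) ∧
    -- (b)
    (((∀ y' : ↥(dualSub 𝕜 Y tY), (fun x : Ω => (y' : Y →ₗ[𝕜] 𝕜) (δ x)) ∈ F) ∧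
        (∀ f : ↥F, ∃! T : ↥(dualSub 𝕜 Y tY),
          ∀ x : Ω, (T : Y →ₗ[𝕜] 𝕜) (δ x) = (f : Ω → 𝕜) x)) →
      ∀ T : ↥F → ↥(dualSub 𝕜 Y tY),
        (∀ (f : ↥F) (x : Ω), ((T f : Y →ₗ[𝕜] 𝕜) (δ x)) = (f : Ω → 𝕜) x) →
        Function.Bijective T ∧
          (∀ y' : ↥(dualSub 𝕜 Y tY), ∃ f : ↥F, T f = y' ∧
            ((f : Ω → 𝕜) = fun x : Ω => (y' : Y →ₗ[𝕜] 𝕜) (δ x))) ∧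
          @Dense Y tY ↑(Submodule.span 𝕜 (Set.range δ))) := by
  refine ⟨fun hii T hT ↦ ?_, fun ⟨hi, hii⟩ T hT ↦ ?_⟩
  · have hlin := dualSub.isLinearMap_of_apply_eq
      (dualSub.precomp_injective_of_existsUnique (hii 0)) hT
    exact ⟨dualSub.injective_of_apply_eq hT, hlin.map_add, hlin.map_smul⟩
  have hδ := dualSub.precomp_injective_of_existsUnique (hii 0)
  have hsurj : ∀ y' : ↥(dualSub 𝕜 Y tY), ∃ f : ↥F, T f = y' ∧
      ((f : Ω → 𝕜) = fun x : Ω => (y' : Y →ₗ[𝕜] 𝕜) (δ x)) :=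
    fun y' ↦ ⟨_, dualSub.apply_eq_of_precomp_mem hδ hT y' (hi y'), rfl⟩
  exact ⟨⟨dualSub.injective_of_apply_eq hT, fun y' ↦ (hsurj y').imp fun _ ↦ And.left⟩,
    hsurj, dualSub.dense_span_range hY hδ⟩

/-- Properties of the map `T` associated with a tuple `(δ, Y)`:
(a) condition (ii) makes any such `T` linear and injective; (b) conditions (i) and (ii)
make it bijective with inverse `y' ↦ y' ∘ δ`, and the span of the range of `δ` is dense. -/
theorem statement1 {𝕜 : Type u} [RCLike 𝕜] {Ω : Type w} [Nonempty Ω]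
    (F : Submodule 𝕜 (Ω → 𝕜))
    {Y : Type v} [AddCommGroup Y] [Module 𝕜 Y] [Module ℝ Y] [IsScalarTower ℝ 𝕜 Y]
    (tY : TopologicalSpace Y) (hY : IsLCH 𝕜 Y tY) (δ : Ω → Y) :
    -- (a)
    ((∀ f : ↥F, ∃! T : ↥(dualSub 𝕜 Y tY),
        ∀ x : Ω, (T : Y →ₗ[𝕜] 𝕜) (δ x) = (f : Ω → 𝕜) x) →
      ∀ T : ↥F → ↥(dualSub 𝕜 Y tY),
        (∀ (f : ↥F) (x : Ω), ((T f : Y →ₗ[𝕜] 𝕜) (δ x)) = (f : Ω → 𝕜) x) →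
        Function.Injective T ∧ (∀ f g : ↥F, T (f + g) = T f + T g) ∧
          ∀ (c : 𝕜) (f : ↥F), T (c • f) = c • T f) ∧
    -- (b)
    (((∀ y' : ↥(dualSub 𝕜 Y tY), (fun x : Ω => (y' : Y →ₗ[𝕜] 𝕜) (δ x)) ∈ F) ∧
        (∀ f : ↥F, ∃! T : ↥(dualSub 𝕜 Y tY),
          ∀ x : Ω, (T : Y →ₗ[𝕜] 𝕜) (δ x) = (f : Ω → 𝕜) x)) →
      ∀ T : ↥F → ↥(dualSub 𝕜 Y tY),
        (∀ (f : ↥F) (x : Ω), ((T f : Y →ₗ[𝕜] 𝕜) (δ x)) = (f : Ω → 𝕜) x) →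
        Function.Bijective T ∧
          (∀ y' : ↥(dualSub 𝕜 Y tY), ∃ f : ↥F, T f = y' ∧
            ((f : Ω → 𝕜) = fun x : Ω => (y' : Y →ₗ[𝕜] 𝕜) (δ x))) ∧
          @Dense Y tY ↑(Submodule.span 𝕜 (Set.range δ))) :=
  statement1_general F tY hY δ
end

section
/- Let F be a linear space of 𝕂-valued functions on a non-empty set Ω, Y a locally convex Hausdorff space over 𝕂, δ : Ω → Y a map, and T : F → Y' a linear injective map such that T(f) ∘ δ = f for all f ∈ F. Then T is surjective if and only if both of the following hold: for every y' ∈ Y' one has y' ∘ δ ∈ F, and the linear span of {δ(x) | x ∈ Ω} is dense in Y. -/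
open Topology Filter Set

universe u v w

section Extra

variable (𝕜 : Type u) [RCLike 𝕜]

/-! If `T` is onto, a functional `φ` killing `δ(Ω)` is `T f` with `f = φ ∘ δ = 0`, so `φ = 0`, and
Hahn–Banach makes the span of `δ(Ω)` dense. Conversely, if `y' ∘ δ ∈ F` then `T (y' ∘ δ)` and `y'`
agree on `δ(Ω)`, hence everywhere by density. -/

open RCLike in
theorem LinearMap.map_eq_zero_of_forall_lt_re {𝕜 E : Type*} [RCLike 𝕜] [AddCommGroup E]
    [Module 𝕜 E] (φ : E →ₗ[𝕜] 𝕜) {p : Submodule 𝕜 E} {u : ℝ} (h : ∀ b ∈ p, u < re (φ b))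
    {b : E} (hb : b ∈ p) : φ b = 0 := by
  by_contra hb0
  have hscaled : φ ((((u - 1 : ℝ) : 𝕜) * (φ b)⁻¹) • b) = ((u - 1 : ℝ) : 𝕜) := by
    rw [map_smul, smul_eq_mul, mul_assoc, inv_mul_cancel₀ hb0, mul_one]
  have := h _ (p.smul_mem (((u - 1 : ℝ) : 𝕜) * (φ b)⁻¹) hb)
  rw [hscaled, ofReal_re] at this
  linarith

section LocallyConvex

variable {𝕜 E : Type*} [RCLike 𝕜] [AddCommGroup E] [Module 𝕜 E] [Module ℝ E]
  [IsScalarTower ℝ 𝕜 E] [TopologicalSpace E] [IsTopologicalAddGroup E] [ContinuousSMul 𝕜 E]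
  [LocallyConvexSpace ℝ E]

theorem Submodule.exists_dual_eq_zero_on_of_notMem_topologicalClosure (p : Submodule 𝕜 E)
    {x : E} (hx : x ∉ p.topologicalClosure) :
    ∃ φ : StrongDual 𝕜 E, (∀ b ∈ p, φ b = 0) ∧ φ x ≠ 0 := by
  obtain ⟨φ, u, hφx, hφ⟩ := RCLike.geometric_hahn_banach_point_closed (𝕜 := 𝕜)
    (p.topologicalClosure.restrictScalars ℝ).convex p.isClosed_topologicalClosure hx
  have hu : u < 0 := by simpa using hφ 0 (zero_mem _)
  refine ⟨φ, fun b hb ↦ (φ : E →ₗ[𝕜] 𝕜).map_eq_zero_of_forall_lt_re hφ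
    (p.le_topologicalClosure hb), fun hφx0 ↦ ?_⟩
  rw [hφx0, map_zero] at hφx
  linarith

theorem dense_span_of_forall_dual_eq_zero {s : Set E}
    (h : ∀ φ : StrongDual 𝕜 E, (∀ x ∈ s, φ x = 0) → φ = 0) :
    Dense (Submodule.span 𝕜 s : Set E) := by
  rw [Submodule.dense_iff_topologicalClosure_eq_top, Submodule.eq_top_iff']
  by_contra! ⟨x, hx⟩
  obtain ⟨φ, hφs, hφx⟩ :=
    (Submodule.span 𝕜 s).exists_dual_eq_zero_on_of_notMem_topologicalClosure hx
  exact hφx (by rw [h φ fun y hy ↦ hφs y (Submodule.subset_span hy)]; rfl)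

end LocallyConvex

theorem statement3_general {𝕜 : Type u} [RCLike 𝕜] {Ω : Type w}
    (F : Submodule 𝕜 (Ω → 𝕜))
    {Y : Type v} [AddCommGroup Y] [Module 𝕜 Y] [Module ℝ Y] [IsScalarTower ℝ 𝕜 Y]
    (tY : TopologicalSpace Y) (hY : IsLCH 𝕜 Y tY) (δ : Ω → Y)
    (T : ↥F →ₗ[𝕜] ↥(dualSub 𝕜 Y tY))
    (hT : ∀ (f : ↥F) (x : Ω), ((T f : Y →ₗ[𝕜] 𝕜) (δ x)) = (f : Ω → 𝕜) x) :
    Function.Surjective T ↔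
      ((∀ y' : ↥(dualSub 𝕜 Y tY), (fun x : Ω => (y' : Y →ₗ[𝕜] 𝕜) (δ x)) ∈ F) ∧
        @Dense Y tY ↑(Submodule.span 𝕜 (Set.range δ))) := by
  let := tY
  have := hY.tag; have := hY.csmul; have := hY.lcs
  have hTδ (f : ↥F) : (fun x ↦ (T f : Y →ₗ[𝕜] 𝕜) (δ x)) = f := funext (hT f)
  constructor
  · intro hsurj
    refine ⟨fun y' ↦ ?_, dense_span_of_forall_dual_eq_zero fun φ hφ ↦ ?_⟩
    · obtain ⟨f, rfl⟩ := hsurj y'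
      exact hTδ f ▸ f.2
    · obtain ⟨f, hf⟩ := hsurj ⟨φ, φ.cont⟩
      have hf0 : f = 0 := Subtype.ext <| by
        rw [← hTδ, hf]
        exact funext fun x ↦ hφ _ ⟨x, rfl⟩
      ext y
      simpa [hf0] using congrArg (fun g : ↥(dualSub 𝕜 Y tY) ↦ (g : Y →ₗ[𝕜] 𝕜) y) hf.symm
  · rintro ⟨hmem, hdense⟩ y'
    refine ⟨⟨_, hmem y'⟩, Subtype.ext ?_⟩
    have := ContinuousLinearMap.ext_on (f := ⟨_, (T ⟨_, hmem y'⟩).2⟩) (g := ⟨_, y'.2⟩) hdense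
      (by rintro _ ⟨x, rfl⟩; exact hT _ x)
    exact congrArg ContinuousLinearMap.toLinearMap this

/-- For a linear injective `T : F → Y'` with `T(f) ∘ δ = f`, `T` is
surjective iff `y' ∘ δ ∈ F` for all `y' ∈ Y'` and the span of the range of `δ` is dense. -/
theorem statement3 {𝕜 : Type u} [RCLike 𝕜] {Ω : Type w} [Nonempty Ω]
    (F : Submodule 𝕜 (Ω → 𝕜))
    {Y : Type v} [AddCommGroup Y] [Module 𝕜 Y] [Module ℝ Y] [IsScalarTower ℝ 𝕜 Y]
    (tY : TopologicalSpace Y) (hY : IsLCH 𝕜 Y tY) (δ : Ω → Y)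
    (T : ↥F →ₗ[𝕜] ↥(dualSub 𝕜 Y tY)) (hinj : Function.Injective T)
    (hT : ∀ (f : ↥F) (x : Ω), ((T f : Y →ₗ[𝕜] 𝕜) (δ x)) = (f : Ω → 𝕜) x) :
    Function.Surjective T ↔
      ((∀ y' : ↥(dualSub 𝕜 Y tY), (fun x : Ω => (y' : Y →ₗ[𝕜] 𝕜) (δ x)) ∈ F) ∧
        @Dense Y tY ↑(Submodule.span 𝕜 (Set.range δ))) :=
  statement3_general F tY hY δ T hT
end Extra
end

section
/- Let (X, τ) be a normable locally convex Hausdorff space. Then the following are equivalent: (a) (X, τ) satisfies (BBC) and (CNC) for some locally convex Hausdorff topology τ̃ on X; (b) (X, τ) is quasi-complete and satisfies (BBC) for some locally convex Hausdorff topology τ̃ on X; (c) there exist a norm |||·||| on X which induces the topology τ and a locally convex Hausdorff topology τ̃ on X such that the closed unit ball B_{|||·|||} = {x ∈ X : |||x||| ≤ 1} is τ̃-compact. -/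
open Topology Filter Set

universe u v w

/-! If the closed unit ball of a norm for `τ` is `τ̃`-compact, then so is every closed ball, which
gives (BBC), and the balls are `τ̃`-closed, which gives (CNC). Conversely, (BBC) applied to the unit
ball yields an absolutely convex, bounded, `τ̃`-compact `B` containing it; the gauge of `B` is then
an equivalent norm, and since `B` is `τ̃`-closed its closed unit ball is exactly `B`. For
quasi-completeness, a Cauchy filter on a bounded set lives in a `τ̃`-compact ball and so has a
`τ̃`-cluster point `x`; as the norm balls are `τ̃`-closed, every set of small diameter in the filter
stays close to `x`, so the filter converges to `x` in norm. -/

open Pointwise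

variable {𝕜 : Type*} [RCLike 𝕜] {X : Type*} [AddCommGroup X]

section Gauge

variable [Module ℝ X]

theorem setOf_gauge_le_one_eq_self_of_isClosed [TopologicalSpace X] [ContinuousSMul ℝ X]
    {s : Set X} (hc : Convex ℝ s) (hs₀ : 0 ∈ s) (ha : Absorbent ℝ s) (hs : IsClosed s) :
    {x | gauge s x ≤ 1} = s :=
  Set.Subset.antisymm (fun _ hx => hs.closure_subset (mem_closure_of_gauge_le_one hc hs₀ ha hx))
    self_subset_setOfPred_gauge_le_one

theorem Seminorm.gauge_le_of_ball_subset (p : Seminorm ℝ X) {s : Set X}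
    (hs : p.ball 0 1 ⊆ s) (x : X) : gauge s x ≤ p x := by
  simpa only [p.gauge_ball] using gauge_mono (p.absorbent_ball_zero one_pos) hs x

theorem Seminorm.le_mul_gauge_of_subset_ball (p : Seminorm ℝ X) {s : Set X} {r : ℝ}
    (hr : 0 < r) (ha : Absorbent ℝ s) (hs : s ⊆ p.ball 0 r) (x : X) :
    p x ≤ r * gauge s x := by
  have hball : gauge (p.ball 0 r) = r⁻¹ • ⇑p := by
    have : p.ball 0 r = r • p.ball 0 1 := by
      rw [Seminorm.smul_ball_zero hr.ne', Real.norm_of_nonneg hr.le, mul_one]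
    rw [this, gauge_smul_left_of_nonneg hr.le, p.gauge_ball]
  calc p x = r * gauge (p.ball 0 r) x := by
        rw [hball, Pi.smul_apply, smul_eq_mul, mul_inv_cancel_left₀ hr.ne']
    _ ≤ r * gauge s x := by gcongr; exact gauge_mono ha hs x

end Gauge

variable [Module 𝕜 X]

section NormBalls

variable {N : Seminorm 𝕜 X}

theorem Seminorm.absConvexS_closedBall_zero [Module ℝ X] [IsScalarTower ℝ 𝕜 X] (r : ℝ) :
    AbsConvexS 𝕜 X (N.closedBall 0 r) :=
  ⟨N.balanced_closedBall_zero r, N.convex_closedBall 0 r⟩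

variable [TopologicalSpace X]

theorem Seminorm.subset_closedBall_of_mem_closure {C : Set X} {x : X} {ε : ℝ}
    (hballs : ∀ a ∈ C, IsClosed (N.closedBall a ε))
    (hC : ∀ a ∈ C, ∀ b ∈ C, N (b - a) ≤ ε) (hx : x ∈ closure C) : C ⊆ N.closedBall x ε := by
  intro a ha
  have hxa : x ∈ N.closedBall a ε := closure_minimal (fun b hb => hC a ha b hb) (hballs a ha) hx
  rwa [Seminorm.mem_closedBall, map_sub_rev] at hxa

variable [ContinuousConstSMul 𝕜 X]

theorem IsCompact.seminorm_closedBall_zero (hK : IsCompact (N.closedBall 0 1)) {r : ℝ}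
    (hr : 0 < r) : IsCompact (N.closedBall 0 r) := by
  have hr' : ‖(r : 𝕜)‖ = r := by rw [RCLike.norm_ofReal, abs_of_pos hr]
  have : N.closedBall 0 r = (r : 𝕜) • N.closedBall 0 1 := by
    rw [Seminorm.smul_closedBall_zero (hr'.symm ▸ hr), hr', mul_one]
  exact this ▸ hK.smul _

theorem IsCompact.isClosed_seminorm_closedBall [IsTopologicalAddGroup X] [T2Space X]
    (hK : IsCompact (N.closedBall 0 1)) (a : X) {r : ℝ} (hr : 0 < r) :
    IsClosed (N.closedBall a r) := by
  have : N.closedBall a r = (· - a) ⁻¹' N.closedBall 0 r := by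
    ext; simp only [Set.mem_preimage, Seminorm.mem_closedBall, sub_zero]
  exact this ▸ (hK.seminorm_closedBall_zero hr).isClosed.preimage (continuous_sub_right a)

end NormBalls

section InducedByNorm

variable {t : TopologicalSpace X} {N : Seminorm 𝕜 X}

theorem InducedByNorm.hasBasis_ball (hN : InducedByNorm 𝕜 X t N) :
    (@nhds X t 0).HasBasis (0 < ·) (N.ball 0) := by
  simpa only [← Seminorm.ball_zero_eq] using hN.2

theorem InducedByNorm.vnb_iff (hN : InducedByNorm 𝕜 X t N) {s : Set X} :
    VNB 𝕜 X t s ↔ ∃ r > 0, s ⊆ N.ball 0 r := by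
  let := t
  refine hN.hasBasis_ball.isVonNBounded_iff.trans ⟨fun h => ?_, fun ⟨r, _, hs⟩ ε hε => ?_⟩
  · obtain ⟨r, hr, hs⟩ := (h 1 one_pos).exists_pos
    have hr' : ‖(r : 𝕜)‖ = r := by rw [RCLike.norm_ofReal, abs_of_pos hr]
    refine ⟨r, hr, (hs r hr'.ge).trans ?_⟩
    rw [Seminorm.smul_ball_zero (by simpa using hr.ne'), hr', mul_one]
  · exact (N.ball_zero_absorbs_ball_zero hε).mono_right hs

theorem InducedByNorm.of_le_of_le_mul (hN : InducedByNorm 𝕜 X t N) {N' : Seminorm 𝕜 X} {r : ℝ}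
    (hr : 0 < r) (h₁ : ∀ x, N' x ≤ N x) (h₂ : ∀ x, N x ≤ r * N' x) :
    InducedByNorm 𝕜 X t N' := by
  refine ⟨fun x hx => hN.1 x (le_antisymm ((h₂ x).trans (by rw [hx, mul_zero])) (apply_nonneg N x)),
    hN.2.to_hasBasis (fun ε hε => ⟨ε / r, div_pos hε hr, fun x hx => ?_⟩)
      (fun ε hε => ⟨ε, hε, fun x hx => (h₁ x).trans_lt hx⟩)⟩
  calc N x ≤ r * N' x := h₂ x
    _ < r * (ε / r) := mul_lt_mul_of_pos_left hx hr
    _ = ε := mul_div_cancel₀ ε hr.ne'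

theorem InducedByNorm.hasBasis_uniformity (hN : InducedByNorm 𝕜 X t N)
    (ht : @IsTopologicalAddGroup X t _) :
    (@uniformity X (@IsTopologicalAddGroup.rightUniformSpace X _ t ht)).HasBasis (0 < ·)
      fun ε => {p : X × X | N (p.2 - p.1) < ε} := by
  let := t
  let := IsTopologicalAddGroup.rightUniformSpace X
  have := isUniformAddGroup_of_addCommGroup (G := X)
  rw [uniformity_eq_comap_nhds_zero X]
  exact hN.2.comap _

end InducedByNorm

section CompactUnitBall

variable [Module ℝ X] {t tt : TopologicalSpace X} {N : Seminorm 𝕜 X}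

variable (𝕜 X) in
def HasCompactUnitBall (t : TopologicalSpace X) : Prop :=
  ∃ (N : Seminorm 𝕜 X) (tt : TopologicalSpace X),
    InducedByNorm 𝕜 X t N ∧ IsLCH 𝕜 X tt ∧ @IsCompact X tt (N.closedBall 0 1)

theorem HasCompactUnitBall.quasiCompleteTop (h : HasCompactUnitBall 𝕜 X t)
    (ht : @IsTopologicalAddGroup X t _) : QuasiCompleteTop 𝕜 X t := by
  obtain ⟨N, tt, hN, htt, hK⟩ := h
  refine ⟨ht, fun s hs hsb f hf hfs => ?_⟩
  have hU := hN.hasBasis_uniformity ht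
  have := hf.1
  obtain ⟨r, hr, hsr⟩ := hN.vnb_iff.1 hsb
  obtain ⟨x, hx⟩ : ∃ x : X, ∀ C ∈ f, ∀ ε > 0, (∀ a ∈ C, ∀ b ∈ C, N (b - a) ≤ ε) →
      C ⊆ N.closedBall x ε := by
    let := tt
    have := htt.tag
    have := htt.t2
    have := htt.csmul
    obtain ⟨x, -, hx⟩ := hK.seminorm_closedBall_zero hr
      (hfs.trans (principal_mono.2 (hsr.trans (N.ball_subset_closedBall 0 r))))
    exact ⟨x, fun C hC ε hε hdiam => N.subset_closedBall_of_mem_closure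
      (fun a _ => hK.isClosed_seminorm_closedBall a hε) hdiam (hx.mem_closure_of_mem C hC)⟩
  let := t
  have := ht
  let := IsTopologicalAddGroup.rightUniformSpace X
  have hfx : f ≤ 𝓝 x := by
    refine (nhds_basis_uniformity' hU).ge_iff.2 fun ε hε => ?_
    obtain ⟨C, hCf, hC⟩ := (hU.cauchy_iff.1 hf).2 (ε / 2) (half_pos hε)
    refine Filter.mem_of_superset hCf fun a ha => ?_
    have hxa := hx C hCf (ε / 2) (half_pos hε) (fun a ha b hb => (hC a ha b hb).le) ha
    exact (N.mem_closedBall.1 hxa).trans_lt (half_lt_self hε)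
  exact ⟨x, hs.mem_of_tendsto hfx (le_principal_iff.1 hfs), hfx⟩

variable [IsScalarTower ℝ 𝕜 X]

theorem bbc_of_isCompact_closedBall (hN : InducedByNorm 𝕜 X t N) (htt : IsLCH 𝕜 X tt)
    (hK : @IsCompact X tt (N.closedBall 0 1)) : BBC 𝕜 X t tt := by
  intro s hs
  obtain ⟨r, hr, hsr⟩ := hN.vnb_iff.1 hs
  let := tt
  have := htt.csmul
  exact ⟨N.closedBall 0 r, hsr.trans (N.ball_subset_closedBall 0 r),
    N.absConvexS_closedBall_zero r,
    hN.vnb_iff.2 ⟨r + 1, by linarith, fun _ hx => hx.trans_lt (lt_add_one r)⟩,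
    hK.seminorm_closedBall_zero hr⟩

theorem cnc_of_isCompact_closedBall (hN : InducedByNorm 𝕜 X t N) (htt : IsLCH 𝕜 X tt)
    (hK : @IsCompact X tt (N.closedBall 0 1)) : CNC 𝕜 X t tt := by
  intro U hU
  obtain ⟨ε, hε, hεU⟩ := hN.hasBasis_ball.mem_iff.1 hU
  let := tt
  have := htt.tag
  have := htt.t2
  have := htt.csmul
  exact ⟨N.closedBall 0 (ε / 2),
    Filter.mem_of_superset (hN.hasBasis_ball.mem_of_mem (half_pos hε))
      (N.ball_subset_closedBall 0 _),
    fun _ hx => hεU (hx.trans_lt (half_lt_self hε)),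
    N.absConvexS_closedBall_zero _, hK.isClosed_seminorm_closedBall 0 (half_pos hε)⟩

theorem HasCompactUnitBall.exists_bbc_cnc (h : HasCompactUnitBall 𝕜 X t) :
    ∃ tt, IsLCH 𝕜 X tt ∧ BBC 𝕜 X t tt ∧ CNC 𝕜 X t tt :=
  let ⟨_, tt, hN, htt, hK⟩ := h
  ⟨tt, htt, bbc_of_isCompact_closedBall hN htt hK, cnc_of_isCompact_closedBall hN htt hK⟩

theorem hasCompactUnitBall_of_bbc (hN : InducedByNorm 𝕜 X t N) (htt : IsLCH 𝕜 X tt)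
    (hb : BBC 𝕜 X t tt) : HasCompactUnitBall 𝕜 X t := by
  obtain ⟨B, hNB, ⟨hbal, hconv⟩, hBb, hBc⟩ :=
    hb (N.ball 0 1) (hN.vnb_iff.2 ⟨1, one_pos, subset_rfl⟩)
  obtain ⟨r, hr, hBr⟩ := hN.vnb_iff.1 hBb
  let NR := N.restrictScalars ℝ
  have habs : Absorbent ℝ B := (NR.absorbent_ball_zero one_pos).mono hNB
  let N' := gaugeSeminorm hbal hconv habs
  refine ⟨N', tt, hN.of_le_of_le_mul hr (NR.gauge_le_of_ball_subset hNB)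
    (NR.le_mul_gauge_of_subset_ball hr habs hBr), htt, ?_⟩
  let := tt
  have := htt.t2
  have := htt.csmul
  have : ContinuousSMul ℝ X := IsScalarTower.continuousSMul 𝕜
  have hball : N'.closedBall 0 1 = B := by
    rw [Seminorm.closedBall_zero_eq]
    exact setOf_gauge_le_one_eq_self_of_isClosed hconv habs.zero_mem habs hBc.isClosed
  rwa [hball]

end CompactUnitBall

/-- For a normable locally convex Hausdorff space `(X, τ)` the following
are equivalent: (a) `(X, τ)` satisfies (BBC) and (CNC) for some `τ̃`; (b) `(X, τ)` is
quasi-complete and satisfies (BBC) for some `τ̃`; (c) there are a norm inducing `τ` and a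
locally convex Hausdorff topology `τ̃` for which the closed unit ball is `τ̃`-compact. -/
theorem statement4 {𝕜 : Type u} [RCLike 𝕜]
    {X : Type v} [AddCommGroup X] [Module 𝕜 X] [Module ℝ X] [IsScalarTower ℝ 𝕜 X]
    (t : TopologicalSpace X) (ht : IsLCH 𝕜 X t)
    (hnorm : ∃ N : Seminorm 𝕜 X, InducedByNorm 𝕜 X t N) :
    ((∃ tt : TopologicalSpace X, IsLCH 𝕜 X tt ∧ BBC 𝕜 X t tt ∧ CNC 𝕜 X t tt) ↔
      (QuasiCompleteTop 𝕜 X t ∧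
        ∃ tt : TopologicalSpace X, IsLCH 𝕜 X tt ∧ BBC 𝕜 X t tt)) ∧
    ((∃ tt : TopologicalSpace X, IsLCH 𝕜 X tt ∧ BBC 𝕜 X t tt ∧ CNC 𝕜 X t tt) ↔
      (∃ (N : Seminorm 𝕜 X) (tt : TopologicalSpace X), InducedByNorm 𝕜 X t N ∧
        IsLCH 𝕜 X tt ∧ @IsCompact X tt {x : X | N x ≤ 1})) := by
  obtain ⟨N, hN⟩ := hnorm
  simp only [← Seminorm.closedBall_zero_eq]
  exact ⟨⟨fun ⟨tt, htt, hb, _⟩ =>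
      ⟨(hasCompactUnitBall_of_bbc hN htt hb).quasiCompleteTop ht.tag, tt, htt, hb⟩,
    fun ⟨_, tt, htt, hb⟩ => (hasCompactUnitBall_of_bbc hN htt hb).exists_bbc_cnc⟩,
    ⟨fun ⟨tt, htt, hb, _⟩ => hasCompactUnitBall_of_bbc hN htt hb,
      HasCompactUnitBall.exists_bbc_cnc⟩⟩
end

section
/- Let (X, τ) be a locally convex Hausdorff space, τ̃ a locally convex Hausdorff topology on X, and γ̃ = γ̃(τ, τ̃) the finest locally convex Hausdorff topology on X which coincides with τ̃ on every τ-bounded set; assume that a subset of X is τ-bounded if and only if it is γ̃-bounded (condition (BτBγ̃)). Then (X, γ̃) is a semi-Montel space if and only if (X, τ) satisfies (BBC) for τ̃. -/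
/-!
A τ-bounded set is γ̃-compact iff it is τ̃-compact, since γ̃ and τ̃ agree on it, and by (BτBγ̃)
the τ-bounded sets are the γ̃-bounded ones. If `(X, γ̃)` is semi-Montel, the closed absolutely
convex hull of a bounded set is bounded (local convexity), hence compact: that is (BBC).
Conversely, (BBC) puts a bounded set inside a γ̃-compact set, which contains its closure since
γ̃ is Hausdorff.
-/

open Topology Filter Set

universe u v w

open scoped ComplexOrder

section LocallyConvex

variable {𝕜 E : Type*}

theorem Bornology.IsVonNBounded.absConvexHull [NontriviallyNormedField 𝕜] [PartialOrder 𝕜]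
    [AddCommGroup E] [Module 𝕜 E] [TopologicalSpace E] [LocallyConvexSpace 𝕜 E]
    [ContinuousSMul 𝕜 E] {s : Set E} (hs : Bornology.IsVonNBounded 𝕜 s) :
    Bornology.IsVonNBounded 𝕜 (absConvexHull 𝕜 s) := by
  intro V hV
  obtain ⟨W, ⟨hW, hWbal, hWconv⟩, hWV⟩ := (nhds_hasBasis_absConvex 𝕜 E).mem_iff.mp hV
  refine Absorbs.mono_left ?_ hWV
  filter_upwards [hs hW] with a ha
  exact absConvexHull_min ha ⟨hWbal.smul a, hWconv.smul a⟩

variable [RCLike 𝕜] [AddCommGroup E] [Module 𝕜 E] [Module ℝ E] [IsScalarTower ℝ 𝕜 E]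

theorem convex_rclike_iff_convex_real {s : Set E} : Convex 𝕜 s ↔ Convex ℝ s :=
  ⟨fun h => h.lift ℝ,
    convex_of_nonneg_surjective_algebraMap 𝕜 fun _ => RCLike.nonneg_iff_exists_ofReal.mp⟩

variable [TopologicalSpace E]

theorem LocallyConvexSpace.rclike_of_real [LocallyConvexSpace ℝ E] : LocallyConvexSpace 𝕜 E :=
  ⟨fun x => by
    simpa only [convex_rclike_iff_convex_real] using LocallyConvexSpace.convex_basis (𝕜 := ℝ) x⟩

theorem exists_absConvex_isCompact_superset_of_forall_isCompact_closure
    [IsTopologicalAddGroup E] [ContinuousSMul 𝕜 E] [T2Space E] [LocallyConvexSpace ℝ E]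
    (hM : ∀ s : Set E, Bornology.IsVonNBounded 𝕜 s → IsCompact (closure s)) {s : Set E}
    (hs : Bornology.IsVonNBounded 𝕜 s) :
    ∃ B, s ⊆ B ∧ Balanced 𝕜 B ∧ Convex ℝ B ∧ Bornology.IsVonNBounded 𝕜 B ∧ IsCompact B := by
  have : LocallyConvexSpace 𝕜 E := .rclike_of_real
  have hH : Bornology.IsVonNBounded 𝕜 (absConvexHull 𝕜 s) := hs.absConvexHull
  refine ⟨closure (absConvexHull 𝕜 s), subset_absConvexHull.trans subset_closure,
    balanced_absConvexHull.closure, convex_rclike_iff_convex_real.1 convex_absConvexHull.closure,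
    hH.closure, hM _ hH⟩

end LocallyConvex

theorem isCompact_congr_of_induced_eq {X : Type*} {t₁ t₂ : TopologicalSpace X} {s : Set X}
    (h : TopologicalSpace.induced ((↑) : s → X) t₁ = TopologicalSpace.induced ((↑) : s → X) t₂) :
    @IsCompact X t₁ s ↔ @IsCompact X t₂ s := by
  rw [@isCompact_iff_compactSpace X t₁, @isCompact_iff_compactSpace X t₂]
  exact iff_of_eq (congrArg (@CompactSpace s) h)

theorem statement8_general {𝕜 : Type u} [RCLike 𝕜]
    {X : Type v} [AddCommGroup X] [Module 𝕜 X] [Module ℝ X] [IsScalarTower ℝ 𝕜 X]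
    (t tt g : TopologicalSpace X)
    (hg : IsGamma 𝕜 X t tt g)
    (hBtB : ∀ s : Set X, VNB 𝕜 X t s ↔ VNB 𝕜 X g s) :
    SemiMontel 𝕜 X g ↔ BBC 𝕜 X t tt := by
  have hcompact (B : Set X) (hB : VNB 𝕜 X t B) : @IsCompact X g B ↔ @IsCompact X tt B :=
    isCompact_congr_of_induced_eq (hg.2.1 B hB)
  let _ := g
  have := hg.1.tag
  have := hg.1.csmul
  have := hg.1.t2
  have := hg.1.lcs
  constructor
  · intro hSM s hs
    obtain ⟨B, hsB, hBbal, hBconv, hBb, hBc⟩ :=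
      exists_absConvex_isCompact_superset_of_forall_isCompact_closure hSM ((hBtB s).1 hs)
    have hBt : VNB 𝕜 X t B := (hBtB B).2 hBb
    exact ⟨B, hsB, ⟨hBbal, hBconv⟩, hBt, (hcompact B hBt).1 hBc⟩
  · intro hBBC s hs
    obtain ⟨B, hsB, -, hBt, hBc⟩ := hBBC s ((hBtB s).2 hs)
    exact ((hcompact B hBt).2 hBc).closure_of_subset hsB

/-- Under condition (BτBγ̃), the space `(X, γ̃)` is semi-Montel iff
`(X, τ)` satisfies (BBC) for `τ̃`. -/
theorem statement8 {𝕜 : Type u} [RCLike 𝕜]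
    {X : Type v} [AddCommGroup X] [Module 𝕜 X] [Module ℝ X] [IsScalarTower ℝ 𝕜 X]
    (t tt g : TopologicalSpace X) (ht : IsLCH 𝕜 X t) (htt : IsLCH 𝕜 X tt)
    (hg : IsGamma 𝕜 X t tt g)
    (hBtB : ∀ s : Set X, VNB 𝕜 X t s ↔ VNB 𝕜 X g s) :
    SemiMontel 𝕜 X g ↔ BBC 𝕜 X t tt :=
  statement8_general t tt g hg hBtB
end

section
/- Let (X, τ) be a bornological locally convex Hausdorff space, B the family of τ-bounded sets, τ̃ a locally convex Hausdorff topology on X, γ̃ = γ̃(τ, τ̃) the finest locally convex Hausdorff topology on X which coincides with τ̃ on every τ-bounded set, and assume a subset of X is τ-bounded iff it is γ̃-bounded (condition (BτBγ̃)). Then: the dual (X, γ̃)' is a closed linear subspace of the complete space (X, τ)'_b; (X, γ̃)' = X'_{B,τ̃} as linear spaces; the strong topology β((X,γ̃)', (X,γ̃)) equals the topology β of X'_{B,τ̃}, which equals the restriction of β((X,τ)', (X,τ)) to (X, γ̃)'. In particular, (X, γ̃)'_b is complete. -/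
open Topology Filter Set

universe u v w

/-!
Both duals are read inside the space `X →ᵤ[𝔅] 𝕜` of functions with uniform convergence on the
`τ`-bounded sets `𝔅`, which is complete. Since `(X, τ)` is bornological, `(X, τ)'` consists of
the linear functionals bounded on every member of `𝔅`; linearity and boundedness on each member
of `𝔅` survive uniform limits on `𝔅`, so `(X, τ)'_b` is complete. By maximality of `γ̃`, a linear
functional `f` is `γ̃`-continuous iff it is `τ̃`-continuous on every `τ`-bounded set: if it is,
`γ̃ ⊓ σ(f)` is still locally convex Hausdorff and agrees with `τ̃` on `𝔅`, so `γ̃ ≤ σ(f)`.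
Continuity on each member of `𝔅` is again preserved by uniform limits on `𝔅`, so `(X, γ̃)'` is
closed in `(X, τ)'_b`, which it embeds into because `τ` and `γ̃` have the same bounded sets and
`τ` is bornological. Those same bounded sets make the two strong topologies coincide.
-/

open scoped UniformConvergence

namespace UniformOnFun

variable {α β : Type*} {𝔖 : Set (Set α)}

theorem isClosed_setOf_isBounded_image [PseudoMetricSpace β] :
    IsClosed {f : α →ᵤ[𝔖] β | ∀ s ∈ 𝔖, Bornology.IsBounded (toFun 𝔖 f '' s)} := by
  simp only [ofPred_forall]
  refine isClosed_biInter fun s hs => isClosed_iff_nhds.mpr fun f hf => ?_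
  obtain ⟨g, hfg, hg⟩ :=
    hf _ (UniformOnFun.gen_mem_nhds β 𝔖 f hs (Metric.dist_mem_uniformity one_pos))
  refine (hg.thickening (δ := 1)).subset ?_
  rintro _ ⟨x, hx, rfl⟩
  exact Metric.mem_thickening_iff.mpr ⟨_, mem_image_of_mem _ hx, hfg x hx⟩

theorem isClosed_setOf_continuousOn [UniformSpace β] [TopologicalSpace α] :
    IsClosed {f : α →ᵤ[𝔖] β | ∀ s ∈ 𝔖, ContinuousOn (toFun 𝔖 f) s} := by
  simp only [ofPred_forall, continuousOn_iff_continuous_domRestrict]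
  exact isClosed_biInter fun s hs => (UniformFun.isClosed_setOfPred_continuous s).preimage
    (UniformOnFun.uniformContinuous_restrict α β 𝔖 hs).continuous

end UniformOnFun

theorem completeTop_of_uniformSpace {G : Type*} [AddCommGroup G] (U : UniformSpace G)
    [IsUniformAddGroup G] [CompleteSpace G] : CompleteTop G U.toTopologicalSpace :=
  ⟨inferInstance, by rwa [IsUniformAddGroup.rightUniformSpace_eq]⟩

instance RCLike.small {𝕜 : Type u} [RCLike 𝕜] : Small.{w} 𝕜 :=
  small_of_injective (f := fun z : 𝕜 => (RCLike.re z, RCLike.im z))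
    fun _ _ h => RCLike.ext (congrArg Prod.fst h) (congrArg Prod.snd h)

theorem isLCH_shrink (𝕜 : Type u) [RCLike 𝕜] : IsLCH 𝕜 (Shrink.{w} 𝕜) inferInstance :=
  let e := Shrink.continuousLinearEquiv 𝕜 𝕜
  { tag := e.toContinuousAddEquiv.isTopologicalAddGroup
    csmul := e.continuousSMul
    t2 := e.toHomeomorph.isEmbedding.t2Space
    lcs := LocallyConvexSpace.induced (Shrink.linearEquiv ℝ 𝕜).toLinearMap }

section Duals

variable {𝕜 : Type u} [RCLike 𝕜] {X : Type v} [AddCommGroup X] [Module 𝕜 X]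

theorem isVonNBounded_image_of_mem_dualSub {t : TopologicalSpace X} {f : X →ₗ[𝕜] 𝕜}
    (hf : f ∈ dualSub 𝕜 X t) {s : Set X} (hs : VNB 𝕜 X t s) :
    Bornology.IsVonNBounded 𝕜 (f '' s) :=
  letI := t
  hs.image (⟨f, hf⟩ : X →L[𝕜] 𝕜)

-- `Bornological` only quantifies over targets in universe `w`, so `𝕜` is moved there by `Shrink`.
theorem Bornological.mem_dualSub_iff {t : TopologicalSpace X}
    (hborn : Bornological.{u, v, w} 𝕜 X t) {f : X →ₗ[𝕜] 𝕜} :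
    f ∈ dualSub 𝕜 X t ↔ ∀ s, VNB 𝕜 X t s → Bornology.IsVonNBounded 𝕜 (f '' s) := by
  refine ⟨fun hf _ hs => isVonNBounded_image_of_mem_dualSub hf hs, fun hbdd => ?_⟩
  let e := Shrink.continuousLinearEquiv.{w} 𝕜 𝕜
  have hcont : @Continuous X (Shrink.{w} 𝕜) t _ (e.symm.toLinearMap ∘ₗ f) :=
    hborn _ inferInstance inferInstance inferInstance inferInstance _ (isLCH_shrink 𝕜) _
      fun s hs => by
      rw [LinearMap.coe_comp, image_comp]
      exact (hbdd s hs).image e.symm.toContinuousLinearMap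
  have hf : ⇑f = e ∘ (e.symm.toLinearMap ∘ₗ f) := by ext; simp
  change @Continuous X 𝕜 t _ f
  rw [hf]
  exact e.continuous.comp hcont

theorem completeTop_of_mem_iff {𝔖 : Set (Set X)} (h𝔖 : ⋃₀ 𝔖 = univ)
    (D : Submodule 𝕜 (X →ₗ[𝕜] 𝕜)) {C : Set (X →ᵤ[𝔖] 𝕜)} (hC : IsClosed C)
    (hD : ∀ f : X →ₗ[𝕜] 𝕜, f ∈ D ↔ UniformOnFun.ofFun 𝔖 f ∈ C) :
    CompleteTop D (.induced (fun f : D => ⇑(f : X →ₗ[𝕜] 𝕜)) (funUC 𝕜 X 𝔖)) := by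
  let j : D →+ X →ᵤ[𝔖] 𝕜 :=
    { toFun f := UniformOnFun.ofFun 𝔖 f, map_zero' := rfl, map_add' _ _ := rfl }
  let U : UniformSpace D := .comap j inferInstance
  have : IsUniformAddGroup D := .comap j
  have hrange : range j =
      UniformOnFun.toFun 𝔖 ⁻¹' range ((⇑) : (X →ₗ[𝕜] 𝕜) → X → 𝕜) ∩ C := by
    ext F
    constructor
    · rintro ⟨f, rfl⟩
      exact ⟨⟨f, rfl⟩, (hD f).mp f.2⟩
    · rintro ⟨⟨f, hf⟩, hFC⟩
      obtain rfl : UniformOnFun.ofFun 𝔖 f = F := hf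
      exact ⟨⟨f, (hD f).mpr hFC⟩, rfl⟩
  have hclosed : IsClosed (range j) := hrange ▸ ((LinearMap.isClosed_range_coe X 𝕜 _).preimage
    (UniformOnFun.uniformContinuous_toFun h𝔖).continuous).inter hC
  have : CompleteSpace D := (completeSpace_iff_isComplete_range ⟨rfl⟩).mpr hclosed.isComplete
  have htop :
      U.toTopologicalSpace = .induced (fun f : D => ⇑(f : X →ₗ[𝕜] 𝕜)) (funUC 𝕜 X 𝔖) := by
    rw [funUC, induced_compose]
    rfl
  exact htop ▸ completeTop_of_uniformSpace U

theorem Bornological.dualSub_le_dualSub {t g : TopologicalSpace X}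
    (hborn : Bornological.{u, v, w} 𝕜 X t) (hbdd : ∀ s, VNB 𝕜 X t s → VNB 𝕜 X g s) :
    dualSub 𝕜 X g ≤ dualSub 𝕜 X t := fun _ hf =>
  hborn.mem_dualSub_iff.mpr fun s hs => isVonNBounded_image_of_mem_dualSub hf (hbdd s hs)

theorem AgreeOnBounded.inf_induced {t tt g : TopologicalSpace X}
    (h : AgreeOnBounded 𝕜 X t tt g) {f : X →ₗ[𝕜] 𝕜}
    (hf : f ∈ bdual 𝕜 X t tt) : AgreeOnBounded 𝕜 X t tt (g ⊓ .induced f inferInstance) := by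
  intro s hs
  rw [induced_inf, h s hs, induced_compose, inf_eq_left, ← continuous_iff_le_induced]
  let := tt
  exact continuousOn_iff_continuous_domRestrict.mp (hf s hs)

theorem AgreeOnBounded.dualSub_le_bdual {t tt g : TopologicalSpace X}
    (h : AgreeOnBounded 𝕜 X t tt g) :
    dualSub 𝕜 X g ≤ bdual 𝕜 X t tt := by
  intro f hf s hs
  have hrestrict : @Continuous s 𝕜 (.induced Subtype.val g) _ (s.domRestrict f) :=
    @Continuous.comp s X 𝕜 (.induced Subtype.val g) g _ _ _ hf continuous_induced_dom
  let := tt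
  rw [h s hs] at hrestrict
  exact continuousOn_iff_continuous_domRestrict.mpr hrestrict

end Duals

section Gamma

variable {𝕜 : Type u} [RCLike 𝕜] {X : Type v} [AddCommGroup X] [Module 𝕜 X] [Module ℝ X]
  [IsScalarTower ℝ 𝕜 X] {t tt g : TopologicalSpace X}

theorem IsLCH.inf_induced (hg : IsLCH 𝕜 X g) (f : X →ₗ[𝕜] 𝕜) :
    IsLCH 𝕜 X (g ⊓ .induced f inferInstance) where
  tag := topologicalAddGroup_inf hg.tag (topologicalAddGroup_induced f)
  csmul := @continuousSMul_inf 𝕜 X _ _ g _ hg.csmul (continuousSMul_induced f.toMulActionHom)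
  t2 := t2Space_antitone inf_le_left hg.t2
  lcs := LocallyConvexSpace.inf hg.lcs (LocallyConvexSpace.induced (f.restrictScalars ℝ))

theorem IsGamma.dualSub_eq_bdual (hg : IsGamma 𝕜 X t tt g) : dualSub 𝕜 X g = bdual 𝕜 X t tt :=
  le_antisymm hg.2.1.dualSub_le_bdual fun f hf => continuous_iff_le_induced.mpr <|
    (hg.2.2 _ (hg.1.inf_induced f) (hg.2.1.inf_induced hf)).trans inf_le_right

end Gamma

theorem statement10_general {𝕜 : Type u} [RCLike 𝕜]
    {X : Type v} [AddCommGroup X] [Module 𝕜 X] [Module ℝ X] [IsScalarTower ℝ 𝕜 X]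
    (t tt g : TopologicalSpace X) (hborn : Bornological 𝕜 X t)
    (ht : IsLCH 𝕜 X t) (hg : IsGamma 𝕜 X t tt g)
    (hBtB : ∀ s : Set X, VNB 𝕜 X t s ↔ VNB 𝕜 X g s) :
    ∃ hsub : ∀ f : X →ₗ[𝕜] 𝕜, f ∈ dualSub 𝕜 X g → f ∈ dualSub 𝕜 X t,
      @IsClosed ↥(dualSub 𝕜 X t) (strongDualTop 𝕜 X t)
        {f : ↥(dualSub 𝕜 X t) | (f : X →ₗ[𝕜] 𝕜) ∈ dualSub 𝕜 X g} ∧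
      CompleteTop ↥(dualSub 𝕜 X t) (strongDualTop 𝕜 X t) ∧
      dualSub 𝕜 X g = bdual 𝕜 X t tt ∧
      strongDualTop 𝕜 X g = dualTopOn 𝕜 X g {s : Set X | VNB 𝕜 X t s} ∧
      strongDualTop 𝕜 X g = TopologicalSpace.induced
        (fun f : ↥(dualSub 𝕜 X g) =>
          (⟨(f : X →ₗ[𝕜] 𝕜), hsub _ f.2⟩ : ↥(dualSub 𝕜 X t)))
        (strongDualTop 𝕜 X t) ∧
      CompleteTop ↥(dualSub 𝕜 X g) (strongDualTop 𝕜 X g) := by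
  set 𝔖 := {s : Set X | VNB 𝕜 X t s}
  have hsub : dualSub 𝕜 X g ≤ dualSub 𝕜 X t := hborn.dualSub_le_dualSub fun s => (hBtB s).mp
  have hcover : ⋃₀ 𝔖 = univ := by
    let := t
    have := ht.csmul
    exact Bornology.sUnion_isVonNBounded_eq_univ
  have hC : IsClosed
      {F : X →ᵤ[𝔖] 𝕜 | ∀ s ∈ 𝔖, @ContinuousOn X 𝕜 tt _ (UniformOnFun.toFun 𝔖 F) s} :=
    @UniformOnFun.isClosed_setOf_continuousOn X 𝕜 𝔖 _ tt
  have hstrong : strongDualTop 𝕜 X g = dualTopOn 𝕜 X g 𝔖 :=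
    congrArg (dualTopOn 𝕜 X g) (Set.ext fun s => (hBtB s).symm)
  refine ⟨hsub, ?_, ?_, hg.dualSub_eq_bdual, hstrong, ?_, ?_⟩
  · have hcont : @Continuous _ (X →ᵤ[𝔖] 𝕜) (strongDualTop 𝕜 X t) _
        fun f : dualSub 𝕜 X t => UniformOnFun.ofFun 𝔖 ⇑(f : X →ₗ[𝕜] 𝕜) :=
      @Continuous.comp _ _ _ (strongDualTop 𝕜 X t) (funUC 𝕜 X 𝔖) _ _ _
        continuous_induced_dom continuous_induced_dom
    rw [hg.dualSub_eq_bdual]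
    exact @IsClosed.preimage _ _ (strongDualTop 𝕜 X t) _ _ hcont _ hC
  · refine completeTop_of_mem_iff hcover _ UniformOnFun.isClosed_setOf_isBounded_image
      fun f => ?_
    simp only [hborn.mem_dualSub_iff, NormedSpace.isVonNBounded_iff]
    rfl
  · rw [hstrong, dualTopOn, strongDualTop, dualTopOn, induced_compose]
    rfl
  · rw [hstrong]
    exact completeTop_of_mem_iff hcover _ hC fun f => by rw [hg.dualSub_eq_bdual]; rfl

/-- Under condition (BτBγ̃) for a bornological locally convex Hausdorff
space `(X, τ)`: `(X, γ̃)'` is a closed subspace of the complete space `(X, τ)'_b`;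
`(X, γ̃)' = X'_{B,τ̃}`; the strong topology `β((X,γ̃)', (X,γ̃))` equals the topology `β`
of uniform convergence on `τ`-bounded sets and equals the topology induced by
`β((X,τ)', (X,τ))`; in particular `(X, γ̃)'_b` is complete. -/
theorem statement10 {𝕜 : Type u} [RCLike 𝕜]
    {X : Type v} [AddCommGroup X] [Module 𝕜 X] [Module ℝ X] [IsScalarTower ℝ 𝕜 X]
    (t tt g : TopologicalSpace X) (hborn : Bornological 𝕜 X t)
    (ht : IsLCH 𝕜 X t) (htt : IsLCH 𝕜 X tt) (hg : IsGamma 𝕜 X t tt g)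
    (hBtB : ∀ s : Set X, VNB 𝕜 X t s ↔ VNB 𝕜 X g s) :
    ∃ hsub : ∀ f : X →ₗ[𝕜] 𝕜, f ∈ dualSub 𝕜 X g → f ∈ dualSub 𝕜 X t,
      @IsClosed ↥(dualSub 𝕜 X t) (strongDualTop 𝕜 X t)
        {f : ↥(dualSub 𝕜 X t) | (f : X →ₗ[𝕜] 𝕜) ∈ dualSub 𝕜 X g} ∧
      CompleteTop ↥(dualSub 𝕜 X t) (strongDualTop 𝕜 X t) ∧
      dualSub 𝕜 X g = bdual 𝕜 X t tt ∧
      strongDualTop 𝕜 X g = dualTopOn 𝕜 X g {s : Set X | VNB 𝕜 X t s} ∧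
      strongDualTop 𝕜 X g = TopologicalSpace.induced
        (fun f : ↥(dualSub 𝕜 X g) =>
          (⟨(f : X →ₗ[𝕜] 𝕜), hsub _ f.2⟩ : ↥(dualSub 𝕜 X t)))
        (strongDualTop 𝕜 X t) ∧
      CompleteTop ↥(dualSub 𝕜 X g) (strongDualTop 𝕜 X g) :=
  statement10_general t tt g hborn ht hg hBtB
end
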